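/- arXiv:1801.07317 — 2 statements merged into one kernel-verified Lean document; each statement's English description precedes it below -/
import Mathlib

section
/- Fix natural numbers m and n, and let σ : Fin m → Fin n → Option Bool be a partial assignment of the m·n bits (none meaning the bit is not yet revealed). For each block i : Fin m define q_i = 0 if there exists j with σ i j = some false, and q_i = 2^(−u_i) otherwise, where u_i is the number of positions j with σ i j = none. Then the proportion, among all total assignments w : Fin m → (Fin n → Bool) that agree with σ on its revealed positions, of those w satisfying the Tribes event (∃ i, ∀ j, w i j = true) equals 1 − ∏_{i : Fin m} (1 − q_i). -/
open Finset

lemma piFinset_filter {m : ℕ} {α : Fin m → Type*} [∀ i, Fintype (α i)] [∀ i, DecidableEq (α i)]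
    (Q : ∀ i, α i → Prop) [∀ i, DecidablePred (Q i)] :
    (univ.filter (fun w : ∀ i, α i => ∀ i, Q i (w i))) =
      Fintype.piFinset (fun i => univ.filter (Q i)) := by
  ext w; simp [Fintype.mem_piFinset]

lemma block_card {n : ℕ} (τ : Fin n → Option Bool) :
    (univ.filter (fun v : Fin n → Bool => ∀ j b, τ j = some b → v j = b)).card =
      2 ^ (univ.filter (fun j => τ j = none)).card := by
  have h : (univ.filter (fun v : Fin n → Bool => ∀ j b, τ j = some b → v j = b)) =
      Fintype.piFinset (fun j => univ.filter (fun x : Bool => ∀ b, τ j = some b → x = b)) := by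
    ext v; simp [Fintype.mem_piFinset, forall_comm (α := Fin n)]
  rw [h, Fintype.card_piFinset]
  have h2 : ∀ j : Fin n, (univ.filter (fun x : Bool => ∀ b, τ j = some b → x = b)).card
      = if τ j = none then 2 else 1 := by
    intro j
    cases hj : τ j with
    | none => simp [hj, Finset.filter_true_of_mem]
    | some b => simp [hj, Finset.filter_eq']
  rw [Finset.prod_congr rfl (fun j _ => h2 j), Finset.prod_ite, Finset.prod_const,
    Finset.prod_const, one_pow, mul_one]

lemma block_true_card {n : ℕ} (τ : Fin n → Option Bool) :
    (univ.filter (fun v : Fin n → Bool =>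
        (∀ j b, τ j = some b → v j = b) ∧ ∀ j, v j = true)).card =
      if ∃ j, τ j = some false then 0 else 1 := by
  split_ifs with h
  · rw [Finset.card_eq_zero, Finset.filter_eq_empty_iff]
    rintro v - ⟨hA, hT⟩
    obtain ⟨j, hj⟩ := h
    have := hA j false hj
    rw [hT j] at this
    simp at this
  · rw [Finset.card_eq_one]
    refine ⟨fun _ => true, ?_⟩
    ext v
    simp only [mem_filter, mem_univ, true_and, Finset.mem_singleton]
    constructor
    · rintro ⟨-, hT⟩; funext j; exact hT j
    · rintro rfl
      exact ⟨fun j b hb => by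
        cases b with
        | true => rfl
        | false => exact absurd ⟨j, hb⟩ h, fun j => rfl⟩

lemma block_fail_card {n : ℕ} (τ : Fin n → Option Bool) :
    (univ.filter (fun v : Fin n → Bool =>
        (∀ j b, τ j = some b → v j = b) ∧ ¬ ∀ j, v j = true)).card =
      2 ^ (univ.filter (fun j => τ j = none)).card -
        (if ∃ j, τ j = some false then 0 else 1) := by
  have h1 := Finset.card_filter_add_card_filter_not
    (s := univ.filter (fun v : Fin n → Bool => ∀ j b, τ j = some b → v j = b))
    (p := fun v : Fin n → Bool => ∀ j, v j = true)
  rw [Finset.filter_filter, Finset.filter_filter, block_true_card τ, block_card τ] at h1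
  by_cases h : ∃ j, τ j = some false
  · rw [if_pos h] at h1 ⊢
    rw [Nat.sub_zero]
    simpa using h1
  · rw [if_neg h] at h1 ⊢
    exact Nat.eq_sub_of_add_eq (by rw [Nat.add_comm]; exact h1)

/-- Conditional probability of the Tribes event given a partial assignment `σ` of the
`m·n` bits: among total assignments agreeing with `σ` on revealed positions, the
proportion satisfying the Tribes event equals `1 - ∏ i, (1 - q i)`, where `q i = 0`
if block `i` has a revealed `false` bit and `q i = 2^(-uᵢ)` otherwise, with `uᵢ` the
number of unrevealed positions of block `i`. -/
theorem tribes_conditional_probability (m n : ℕ) (σ : Fin m → Fin n → Option Bool) :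
    (((Finset.univ.filter
          (fun w : Fin m → Fin n → Bool =>
            ∀ (i : Fin m) (j : Fin n) (b : Bool), σ i j = some b → w i j = b)).filter
        (fun w : Fin m → Fin n → Bool => ∃ i : Fin m, ∀ j : Fin n, w i j = true)).card : ℝ) /
      ((Finset.univ.filter
          (fun w : Fin m → Fin n → Bool =>
            ∀ (i : Fin m) (j : Fin n) (b : Bool), σ i j = some b → w i j = b)).card : ℝ)
      = 1 - ∏ i : Fin m,
          (1 - if ∃ j : Fin n, σ i j = some false then (0 : ℝ)
            else (2 : ℝ) ^ (-((Finset.univ.filter (fun j : Fin n => σ i j = none)).card : ℤ))) := by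
  set u : Fin m → ℕ := fun i => (univ.filter (fun j : Fin n => σ i j = none)).card with hu
  set c : Fin m → ℕ := fun i => 2 ^ u i - (if ∃ j, σ i j = some false then 0 else 1) with hc
  set A : Finset (Fin m → Fin n → Bool) := univ.filter
    (fun w => ∀ (i : Fin m) (j : Fin n) (b : Bool), σ i j = some b → w i j = b) with hA
  -- denominator
  have hD : A.card = ∏ i, 2 ^ u i := by
    have h : A = Fintype.piFinset (fun i => univ.filter
        (fun v : Fin n → Bool => ∀ j b, σ i j = some b → v j = b)) := by
      ext w; simp [hA, Fintype.mem_piFinset]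
    rw [h, Fintype.card_piFinset]
    exact Finset.prod_congr rfl fun i _ => block_card (σ i)
  -- non-tribes within A
  have hNT : (A.filter (fun w => ¬ ∃ i : Fin m, ∀ j : Fin n, w i j = true)).card
      = ∏ i, c i := by
    have h : A.filter (fun w => ¬ ∃ i : Fin m, ∀ j : Fin n, w i j = true)
        = Fintype.piFinset (fun i => univ.filter
            (fun v : Fin n → Bool => (∀ j b, σ i j = some b → v j = b) ∧ ¬ ∀ j, v j = true)) := by
      ext w
      simp [hA, Fintype.mem_piFinset, forall_and, not_exists]
    rw [h, Fintype.card_piFinset]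
    exact Finset.prod_congr rfl fun i _ => block_fail_card (σ i)
  have hsplit := Finset.card_filter_add_card_filter_not
    (s := A) (p := fun w => ∃ i : Fin m, ∀ j : Fin n, w i j = true)
  have hle : ∏ i, c i ≤ ∏ i, 2 ^ u i :=
    Finset.prod_le_prod' fun i _ => Nat.sub_le _ _
  have hN : ((A.filter (fun w => ∃ i : Fin m, ∀ j : Fin n, w i j = true)).card : ℝ)
      = ((∏ i, 2 ^ u i : ℕ) : ℝ) - ((∏ i, c i : ℕ) : ℝ) := by
    rw [hNT, hD] at hsplit
    rw [Nat.eq_sub_of_add_eq hsplit, Nat.cast_sub hle]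
  set q : Fin m → ℝ := fun i => if ∃ j : Fin n, σ i j = some false then (0 : ℝ)
    else (2 : ℝ) ^ (-(u i : ℤ)) with hq
  have hci : ∀ i, ((c i : ℕ) : ℝ) = 2 ^ u i * (1 - q i) := by
    intro i
    simp only [hc, hq]
    split_ifs with h
    · simp
    · have h1 : (1 : ℕ) ≤ 2 ^ u i := Nat.one_le_two_pow
      rw [Nat.cast_sub h1]
      have h2 : (2 : ℝ) ^ (-(u i : ℤ)) = ((2 : ℝ) ^ u i)⁻¹ := by
        rw [zpow_neg, zpow_natCast]
      rw [h2]
      have h3 : (2 : ℝ) ^ u i ≠ 0 := by positivity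
      push_cast
      field_simp
  have hP : ((∏ i, c i : ℕ) : ℝ) = (∏ i, (2:ℝ) ^ u i) * ∏ i, (1 - q i) := by
    rw [Nat.cast_prod, ← Finset.prod_mul_distrib]
    exact Finset.prod_congr rfl fun i _ => hci i
  have hDcast : ((∏ i, 2 ^ u i : ℕ) : ℝ) = ∏ i, (2:ℝ) ^ u i := by push_cast; rfl
  have hDne : (∏ i, (2:ℝ) ^ u i) ≠ 0 := by positivity
  have hR : ∀ i : Fin m, (1 - if ∃ j : Fin n, σ i j = some false then (0 : ℝ)
      else (2 : ℝ) ^ (-((Finset.univ.filter (fun j : Fin n => σ i j = none)).card : ℤ)))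
      = 1 - q i := fun i => rfl
  rw [Finset.prod_congr rfl (fun i (_ : i ∈ univ) => hR i), hN, hD, hDcast, hP]
  field_simp
end

section
/- Let X = Π (n : ℕ), (Fin (2^n) → Fin n → Bool) be equipped with the infinite product μ of the uniform probability measures on each factor. For each n let E_n ⊆ X be the event that there exists i : Fin (2^n) with (x n) i j = true for all j : Fin n. Then μ of the set of points x ∈ X such that both {n ≥ 1 | x ∈ E_n} and {n ≥ 1 | x ∉ E_n} are infinite equals 1. -/
/-!
The marginal condition identifies `μ` with the infinite product `Measure.infinitePi` of the
uniform measures, so the coordinates are independent. The probability that no block of the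
`n`-th coordinate is all-true is `(1 - 2⁻ⁿ) ^ 2ⁿ → e⁻¹ ∈ (0, 1)`. Hence both these events and
their complements are independent with divergent sums of probabilities, and the second
Borel–Cantelli lemma makes each of them occur infinitely often almost surely.
-/

open MeasureTheory ProbabilityTheory Filter Set Topology
open scoped ENNReal

lemma MeasurableSpace.generateFrom_singleton_compl {α : Type*} (s : Set α) :
    generateFrom {sᶜ} = generateFrom {s} := by
  refine le_antisymm (generateFrom_singleton_le ?_) (generateFrom_singleton_le ?_)
  · exact (measurableSet_generateFrom (mem_singleton s)).compl
  · simpa using (measurableSet_generateFrom (mem_singleton sᶜ)).compl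

namespace ProbabilityTheory

variable {Ω ι : Type*} {mΩ : MeasurableSpace Ω} {μ : Measure Ω}

lemma iIndepSet.compl {s : ι → Set Ω} (h : iIndepSet s μ) : iIndepSet (fun i ↦ (s i)ᶜ) μ := by
  rw [iIndepSet_iff_iIndep] at h ⊢
  simpa only [MeasurableSpace.generateFrom_singleton_compl] using h

lemma iIndepFun.iIndepSet_preimage {β : ι → Type*} {mβ : ∀ i, MeasurableSpace (β i)}
    {f : ∀ i, Ω → β i} (hf : iIndepFun f μ) (hfm : ∀ i, Measurable (f i))
    {t : ∀ i, Set (β i)} (ht : ∀ i, MeasurableSet (t i)) :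
    iIndepSet (fun i ↦ f i ⁻¹' t i) μ :=
  (iIndepSet_iff_meas_biInter fun i ↦ hfm i (ht i)).2 fun S ↦
    hf.measure_inter_preimage_eq_mul S fun i _ ↦ ht i

lemma iIndepSet.ae_frequently_mem_of_tendsto {s : ℕ → Set Ω} (hs : iIndepSet s μ)
    (hsm : ∀ n, MeasurableSet (s n)) {p : ℝ≥0∞} (hp : p ≠ 0)
    (h : Tendsto (fun n ↦ μ (s n)) atTop (𝓝 p)) :
    ∀ᵐ ω ∂μ, ∃ᶠ n in atTop, ω ∈ s n := by
  have := hs.isProbabilityMeasure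
  have hsum : ∑' n, μ (s n) = ∞ := by
    by_contra hne
    exact hp (tendsto_nhds_unique h (ENNReal.tendsto_atTop_zero_of_tsum_ne_top hne))
  have hlim := measure_limsup_eq_one hsm hs hsum
  rw [← mem_ae_iff_prob_eq_one (MeasurableSet.measurableSet_limsup hsm)] at hlim
  filter_upwards [hlim] with ω hω
  exact mem_limsup_iff_frequently_mem.1 hω

lemma iIndepSet.ae_frequently_mem_and_frequently_not_mem {s : ℕ → Set Ω} (hs : iIndepSet s μ)
    (hsm : ∀ n, MeasurableSet (s n)) {p : ℝ≥0∞} (hp₀ : p ≠ 0) (hp₁ : p ≠ 1)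
    (h : Tendsto (fun n ↦ μ (s n)) atTop (𝓝 p)) :
    ∀ᵐ ω ∂μ, (∃ᶠ n in atTop, ω ∈ s n) ∧ ∃ᶠ n in atTop, ω ∉ s n := by
  have := hs.isProbabilityMeasure
  have hcompl : Tendsto (fun n ↦ μ (s n)ᶜ) atTop (𝓝 (1 - p)) := by
    simp_rw [prob_compl_eq_one_sub (hsm _)]
    exact ENNReal.Tendsto.sub tendsto_const_nhds h (.inl ENNReal.one_ne_top)
  exact (hs.ae_frequently_mem_of_tendsto hsm hp₀ h).and
    (hs.compl.ae_frequently_mem_of_tendsto (fun n ↦ (hsm n).compl)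
      (tsub_pos_of_lt ((le_of_tendsto' h fun _ ↦ prob_le_one).lt_of_ne hp₁)).ne' hcompl)

end ProbabilityTheory

lemma ENNReal.tendsto_one_sub_inv_pow :
    Tendsto (fun m : ℕ ↦ (1 - (m : ℝ≥0∞)⁻¹) ^ m) atTop (𝓝 (ENNReal.ofReal (Real.exp (-1)))) := by
  refine (ENNReal.tendsto_ofReal (Real.tendsto_one_add_div_pow_exp (-1))).congr' ?_
  filter_upwards [eventually_ge_atTop 1] with m hm
  have hm' : (0 : ℝ) < m := by exact_mod_cast hm
  rw [neg_div, one_div, ← sub_eq_add_neg,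
    ENNReal.ofReal_pow (sub_nonneg.2 (inv_le_one_of_one_le₀ (by exact_mod_cast hm))),
    ENNReal.ofReal_sub _ (inv_nonneg.2 hm'.le), ENNReal.ofReal_one, ENNReal.ofReal_inv_of_pos hm',
    ENNReal.ofReal_natCast]

lemma Fintype.card_pi_forall_ne {ι α : Type*} [Fintype ι] [DecidableEq ι] [Fintype α]
    [DecidableEq α] (a : α) :
    Fintype.card {f : ι → α // ∀ i, f i ≠ a} = (Fintype.card α - 1) ^ Fintype.card ι := by
  rw [Fintype.card_congr (Equiv.subtypePiEquivPi (p := fun _ x ↦ x ≠ a))]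
  simp

lemma PMF.toMeasure_uniformOfFintype_pi_forall_ne {ι α : Type*} [Fintype ι] [DecidableEq ι]
    [Fintype α] [Nonempty α] [MeasurableSpace α] [MeasurableSingletonClass α] (a : α) :
    (PMF.uniformOfFintype (ι → α)).toMeasure {f | ∀ i, f i ≠ a}
      = (1 - (Fintype.card α : ℝ≥0∞)⁻¹) ^ Fintype.card ι := by
  classical
  have hα : (Fintype.card α : ℝ≥0∞) ≠ 0 := by simp
  rw [PMF.toMeasure_uniformOfFintype_apply _ (Set.toFinite _).measurableSet]
  simp only [Set.coe_ofPred, Fintype.card_pi_forall_ne, Fintype.card_fun]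
  rw [Nat.cast_pow, Nat.cast_pow, div_eq_mul_inv, ENNReal.inv_pow, ← mul_pow, ← div_eq_mul_inv,
    ENNReal.natCast_sub, Nat.cast_one, ENNReal.sub_div fun _ _ ↦ hα,
    ENNReal.div_self hα (ENNReal.natCast_ne_top _), one_div]

lemma Nat.infinite_setOf_one_le_and_of_frequently {p : ℕ → Prop} (h : ∃ᶠ n in atTop, p n) :
    {n | 1 ≤ n ∧ p n}.Infinite :=
  Nat.frequently_atTop_iff_infinite.1 <| (h.and_eventually (eventually_ge_atTop 1)).mono
    fun _ hn ↦ hn.symm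

theorem tribes_infinitely_often_and_infinitely_often_not_general
    (μ : Measure (Π n : ℕ, Fin (2 ^ n) → Fin n → Bool))
    (hμ : ∀ S : Finset ℕ,
      μ.map (fun x => fun n : S => x n)
        = Measure.pi (fun n : S =>
            (PMF.uniformOfFintype (Fin (2 ^ (n : ℕ)) → Fin (n : ℕ) → Bool)).toMeasure)) :
    μ {x : Π n : ℕ, Fin (2 ^ n) → Fin n → Bool |
        {n : ℕ | 1 ≤ n ∧ ∃ i : Fin (2 ^ n), ∀ j : Fin n, x n i j = true}.Infinite ∧
        {n : ℕ | 1 ≤ n ∧ ¬ ∃ i : Fin (2 ^ n), ∀ j : Fin n, x n i j = true}.Infinite} = 1 := by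
  let ν (n : ℕ) := (PMF.uniformOfFintype (Fin (2 ^ n) → Fin n → Bool)).toMeasure
  obtain rfl : μ = Measure.infinitePi ν :=
    ((Measure.isProjectiveLimit_infinitePi ν).unique fun S ↦ hμ S).symm
  set noFullBlock : ℕ → Set (Π n : ℕ, Fin (2 ^ n) → Fin n → Bool) :=
    fun n ↦ (fun x ↦ x n) ⁻¹' {f | ∀ i, f i ≠ fun _ ↦ true}
  have hmeas (n : ℕ) : MeasurableSet (noFullBlock n) :=
    measurable_pi_apply n (Set.toFinite _).measurableSet
  have hindep : iIndepSet noFullBlock (Measure.infinitePi ν) :=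
    (iIndepFun_infinitePi (X := fun _ ↦ id) fun _ ↦ measurable_id).iIndepSet_preimage
      measurable_pi_apply fun _ ↦ (Set.toFinite _).measurableSet
  have hprob (n : ℕ) :
      Measure.infinitePi ν (noFullBlock n) = (1 - ((2 ^ n : ℕ) : ℝ≥0∞)⁻¹) ^ 2 ^ n := by
    rw [← Measure.map_apply (measurable_pi_apply n) (Set.toFinite _).measurableSet,
      Measure.infinitePi_map_eval, PMF.toMeasure_uniformOfFintype_pi_forall_ne]
    simp
  have hlim : Tendsto (fun n ↦ Measure.infinitePi ν (noFullBlock n)) atTop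
      (𝓝 (ENNReal.ofReal (Real.exp (-1)))) := by
    simp_rw [hprob]
    exact ENNReal.tendsto_one_sub_inv_pow.comp (tendsto_pow_atTop_atTop_of_one_lt one_lt_two)
  have hae := hindep.ae_frequently_mem_and_frequently_not_mem hmeas
    (ENNReal.ofReal_pos.2 (Real.exp_pos _)).ne'
    (ENNReal.ofReal_lt_one.2 (Real.exp_lt_one_iff.2 (by norm_num))).ne hlim
  refine (measure_congr (ae_eq_univ.2 (ae_iff.1 ?_))).trans measure_univ
  filter_upwards [hae] with x ⟨hno, hyes⟩
  have hmem (n : ℕ) : x ∈ noFullBlock n ↔ ¬∃ i, ∀ j, x n i j = true := by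
    simp [noFullBlock, funext_iff]
  simp only [hmem, not_not] at hno hyes
  exact ⟨Nat.infinite_setOf_one_le_and_of_frequently hyes,
    Nat.infinite_setOf_one_le_and_of_frequently hno⟩

/-- Let `X = Π n, (Fin (2^n) → Fin n → Bool)` carry the infinite product `μ` of the
uniform probability measures on the factors (characterized here by its
finite-dimensional marginals: for every finite set `S` of coordinates, the joint
distribution of those coordinates is the finite product of uniform measures).
For each `n`, let `E_n` be the tribes event that some block `i : Fin (2^n)` of the
`n`-th coordinate is all-true. Then `μ`-almost every point lies in `E_n` for
infinitely many `n ≥ 1` and outside `E_n` for infinitely many `n ≥ 1`. -/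
theorem tribes_infinitely_often_and_infinitely_often_not
    (μ : Measure (Π n : ℕ, Fin (2 ^ n) → Fin n → Bool)) [IsProbabilityMeasure μ]
    (hμ : ∀ S : Finset ℕ,
      μ.map (fun x => fun n : S => x n)
        = Measure.pi (fun n : S =>
            (PMF.uniformOfFintype (Fin (2 ^ (n : ℕ)) → Fin (n : ℕ) → Bool)).toMeasure)) :
    μ {x : Π n : ℕ, Fin (2 ^ n) → Fin n → Bool |
        {n : ℕ | 1 ≤ n ∧ ∃ i : Fin (2 ^ n), ∀ j : Fin n, x n i j = true}.Infinite ∧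
        {n : ℕ | 1 ≤ n ∧ ¬ ∃ i : Fin (2 ^ n), ∀ j : Fin n, x n i j = true}.Infinite} = 1 :=
  tribes_infinitely_often_and_infinitely_often_not_general μ hμ
end
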